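/- Let (S, +, ∘) be a dual weak brace and z ∈ D_r(S). The map τ^z from (S,∘) to Map(S), sending b to τ_b^z where τ_b^z(a) = (-a ∘ z + a ∘ b ∘ z)⁻ ∘ a ∘ b, is an anti-homomorphism: τ^z_{b∘c} = τ^z_c ∘ τ^z_b for all b, c ∈ S. -/
import Mathlib



/-- Auxiliary: a bare inverse semigroup (unique von Neumann inverses). -/
structure ISg (S : Type*) where
  m : S → S → S
  i : S → S
  assoc : ∀ a b c, m (m a b) c = m a (m b c)
  reg : ∀ a, m (m a (i a)) a = a
  ireg : ∀ a, m (m (i a) a) (i a) = i a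
  uniq : ∀ a b, m (m a b) a = a → m (m b a) b = b → b = i a

namespace ISg

variable {S : Type*} (G : ISg S)

theorem reg' (a : S) : G.m a (G.m (G.i a) a) = a := by rw [← G.assoc, G.reg]

theorem ireg' (a : S) : G.m (G.i a) (G.m a (G.i a)) = G.i a := by rw [← G.assoc, G.ireg]

theorem i_i (a : S) : G.i (G.i a) = a :=
  (G.uniq (G.i a) a (G.ireg a) (G.reg a)).symm

theorem i_idem {e : S} (he : G.m e e = e) : G.i e = e :=
  (G.uniq e e (by rw [he, he]) (by rw [he, he])).symm

theorem mul_i_idem (a : S) : G.m (G.m a (G.i a)) (G.m a (G.i a)) = G.m a (G.i a) := by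
  rw [← G.assoc, G.reg]

theorem i_mul_idem (a : S) : G.m (G.m (G.i a) a) (G.m (G.i a) a) = G.m (G.i a) a := by
  rw [G.assoc, ← G.assoc a, G.reg]

/-- product of idempotents is idempotent -/
theorem idem_mul {e f : S} (he : G.m e e = e) (hf : G.m f f = f) :
    G.m (G.m e f) (G.m e f) = G.m e f := by
  set x := G.i (G.m e f) with hx
  have h2 : G.m (G.m x (G.m e f)) x = x := G.ireg (G.m e f)
  set y := G.m f (G.m x e) with hy
  have c1 : G.m (G.m (G.m e f) y) (G.m e f) = G.m e f := by
    have h : G.m (G.m (G.m e f) y) (G.m e f)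
        = G.m e (G.m (G.m f f) (G.m x (G.m (G.m e e) f))) := by
      simp only [hy, G.assoc]
    rw [h, hf, he]
    have h : G.m e (G.m f (G.m x (G.m e f))) = G.m (G.m (G.m e f) x) (G.m e f) := by
      simp only [G.assoc]
    rw [h, G.reg]
  have c2 : G.m (G.m y (G.m e f)) y = y := by
    have h : G.m (G.m y (G.m e f)) y
        = G.m f (G.m x (G.m (G.m e e) (G.m (G.m f f) (G.m x e)))) := by
      simp only [hy, G.assoc]
    rw [h, he, hf]
    have h : G.m f (G.m x (G.m e (G.m f (G.m x e))))
        = G.m f (G.m (G.m (G.m x (G.m e f)) x) e) := by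
      simp only [G.assoc]
    rw [h, h2]
  have hyx : y = x := G.uniq (G.m e f) y c1 c2
  have hxx : G.m x x = x := by
    conv_lhs => rw [← hyx, hy]
    have h : G.m (G.m f (G.m x e)) (G.m f (G.m x e))
        = G.m f (G.m (G.m (G.m x (G.m e f)) x) e) := by
      simp only [G.assoc]
    rw [h, h2, ← hy, hyx]
  have hfx : G.i x = G.m e f := by rw [hx, G.i_i]
  rw [← hfx, G.i_idem hxx]; exact hxx

theorem comm_idem {e f : S} (he : G.m e e = e) (hf : G.m f f = f) :
    G.m e f = G.m f e := by
  have hef : G.m (G.m e f) (G.m e f) = G.m e f := G.idem_mul he hf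
  have hfe : G.m (G.m f e) (G.m f e) = G.m f e := G.idem_mul hf he
  have c1 : G.m (G.m (G.m e f) (G.m f e)) (G.m e f) = G.m e f := by
    have h : G.m (G.m (G.m e f) (G.m f e)) (G.m e f)
        = G.m e (G.m (G.m f f) (G.m (G.m e e) f)) := by simp only [G.assoc]
    rw [h, hf, he]
    have h : G.m e (G.m f (G.m e f)) = G.m (G.m e f) (G.m e f) := by simp only [G.assoc]
    rw [h, hef]
  have c2 : G.m (G.m (G.m f e) (G.m e f)) (G.m f e) = G.m f e := by
    have h : G.m (G.m (G.m f e) (G.m e f)) (G.m f e)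
        = G.m f (G.m (G.m e e) (G.m (G.m f f) e)) := by simp only [G.assoc]
    rw [h, he, hf]
    have h : G.m f (G.m e (G.m f e)) = G.m (G.m f e) (G.m f e) := by simp only [G.assoc]
    rw [h, hfe]
  have h : G.m f e = G.i (G.m e f) := G.uniq (G.m e f) (G.m f e) c1 c2
  rw [h, G.i_idem hef]

theorem i_mul (a b : S) : G.i (G.m a b) = G.m (G.i b) (G.i a) := by
  refine (G.uniq (G.m a b) (G.m (G.i b) (G.i a)) ?_ ?_).symm
  · have h1 : G.m (G.m (G.m a b) (G.m (G.i b) (G.i a))) (G.m a b)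
        = G.m a (G.m (G.m (G.m b (G.i b)) (G.m (G.i a) a)) b) := by simp only [G.assoc]
    rw [h1, G.comm_idem (G.mul_i_idem b) (G.i_mul_idem a)]
    have h2 : G.m a (G.m (G.m (G.m (G.i a) a) (G.m b (G.i b))) b)
        = G.m (G.m (G.m a (G.i a)) a) (G.m (G.m b (G.i b)) b) := by simp only [G.assoc]
    rw [h2, G.reg, G.reg]
  · have h1 : G.m (G.m (G.m (G.i b) (G.i a)) (G.m a b)) (G.m (G.i b) (G.i a))
        = G.m (G.i b) (G.m (G.m (G.m (G.i a) a) (G.m b (G.i b))) (G.i a)) := by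
      simp only [G.assoc]
    rw [h1, G.comm_idem (G.i_mul_idem a) (G.mul_i_idem b)]
    have h2 : G.m (G.i b) (G.m (G.m (G.m b (G.i b)) (G.m (G.i a) a)) (G.i a))
        = G.m (G.m (G.m (G.i b) b) (G.i b)) (G.m (G.m (G.i a) a) (G.i a)) := by
      simp only [G.assoc]
    rw [h2, G.ireg, G.ireg]

end ISg

/-- A dual weak (left) brace: `(S,+)` and `(S,∘)` are inverse semigroups, `(S,∘)` is
Clifford, with `a ∘ (b + c) = a ∘ b - a + a ∘ c` and `a ∘ a⁻ = -a + a`. -/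
structure DualWeakBrace (S : Type*) where
  add : S → S → S
  mul : S → S → S
  neg : S → S
  inv : S → S
  add_assoc : ∀ a b c, add (add a b) c = add a (add b c)
  mul_assoc : ∀ a b c, mul (mul a b) c = mul a (mul b c)
  add_reg : ∀ a, add (add a (neg a)) a = a
  neg_reg : ∀ a, add (add (neg a) a) (neg a) = neg a
  neg_unique : ∀ a b, add (add a b) a = a → add (add b a) b = b → b = neg a
  mul_reg : ∀ a, mul (mul a (inv a)) a = a
  inv_reg : ∀ a, mul (mul (inv a) a) (inv a) = inv a
  inv_unique : ∀ a b, mul (mul a b) a = a → mul (mul b a) b = b → b = inv a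
  clifford : ∀ a, mul a (inv a) = mul (inv a) a
  dist : ∀ a b c, mul a (add b c) = add (add (mul a b) (neg a)) (mul a c)
  weak : ∀ a, mul a (inv a) = add (neg a) a

/-- The right distributor `D_r(S)`. -/
def DualWeakBrace.Dr {S : Type*} (B : DualWeakBrace S) : Set S :=
  {z | ∀ a b, B.mul (B.add a b) z = B.add (B.add (B.mul a z) (B.neg z)) (B.mul b z)}

/-- `σ_a^z(b) = -a∘z + a∘b∘z`. -/
def DualWeakBrace.sigma {S : Type*} (B : DualWeakBrace S) (z a b : S) : S :=
  B.add (B.neg (B.mul a z)) (B.mul (B.mul a b) z)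

/-- `τ_b^z(a) = (σ_a^z(b))⁻ ∘ a ∘ b`. -/
def DualWeakBrace.tau {S : Type*} (B : DualWeakBrace S) (z b a : S) : S :=
  B.mul (B.mul (B.inv (B.sigma z a b)) a) b

/-- The deformed map `r_z`. -/
def DualWeakBrace.rz {S : Type*} (B : DualWeakBrace S) (z : S) : S × S → S × S :=
  fun p => (B.sigma z p.1 p.2, B.tau z p.2 p.1)

/-- The map `ř_w(a,b) = (a∘b - a∘w + w, (a∘b - a∘w + w)⁻ ∘ a ∘ b)`. -/
def DualWeakBrace.rcheck {S : Type*} (B : DualWeakBrace S) (w : S) : S × S → S × S :=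
  fun p =>
    (B.add (B.add (B.mul p.1 p.2) (B.neg (B.mul p.1 w))) w,
     B.mul (B.mul (B.inv (B.add (B.add (B.mul p.1 p.2) (B.neg (B.mul p.1 w))) w)) p.1) p.2)

namespace DualWeakBrace

variable {S : Type*} (B : DualWeakBrace S)

/-- the additive inverse semigroup -/
def aI : ISg S := ⟨B.add, B.neg, B.add_assoc, B.add_reg, B.neg_reg, B.neg_unique⟩

/-- the multiplicative inverse semigroup -/
def mI : ISg S := ⟨B.mul, B.inv, B.mul_assoc, B.mul_reg, B.inv_reg, B.inv_unique⟩

section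
local infixl:65 " ⊹ " => B.add
local infixl:70 " ⊡ " => B.mul
local prefix:max "♮" => B.neg
local postfix:max "♯" => B.inv

-- wrappers, additive
theorem nn (a : S) : ♮♮a = a := B.aI.i_i a
theorem neg_add (a b : S) : ♮(a ⊹ b) = ♮b ⊹ ♮a := B.aI.i_mul a b
theorem neg_idem {e : S} (he : e ⊹ e = e) : ♮e = e := B.aI.i_idem he
theorem acomm {e f : S} (he : e ⊹ e = e) (hf : f ⊹ f = f) : e ⊹ f = f ⊹ e :=
  B.aI.comm_idem he hf
theorem aidem {e f : S} (he : e ⊹ e = e) (hf : f ⊹ f = f) :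
    (e ⊹ f) ⊹ (e ⊹ f) = e ⊹ f := B.aI.idem_mul he hf
theorem areg' (a : S) : a ⊹ (♮a ⊹ a) = a := B.aI.reg' a
theorem nreg' (a : S) : ♮a ⊹ (a ⊹ ♮a) = ♮a := B.aI.ireg' a

-- wrappers, multiplicative
theorem ii (a : S) : a♯♯ = a := B.mI.i_i a
theorem inv_mul (a b : S) : (a ⊡ b)♯ = b♯ ⊡ a♯ := B.mI.i_mul a b
theorem inv_idem {e : S} (he : e ⊡ e = e) : e♯ = e := B.mI.i_idem he
theorem mcomm {e f : S} (he : e ⊡ e = e) (hf : f ⊡ f = f) : e ⊡ f = f ⊡ e :=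
  B.mI.comm_idem he hf
theorem midem {e f : S} (he : e ⊡ e = e) (hf : f ⊡ f = f) :
    (e ⊡ f) ⊡ (e ⊡ f) = e ⊡ f := B.mI.idem_mul he hf
theorem mreg' (a : S) : a ⊡ (a♯ ⊡ a) = a := B.mI.reg' a
theorem ireg' (a : S) : a♯ ⊡ (a ⊡ a♯) = a♯ := B.mI.ireg' a
theorem mii (a : S) : (a ⊡ a♯) ⊡ (a ⊡ a♯) = a ⊡ a♯ := B.mI.mul_i_idem a
theorem imi (a : S) : (a♯ ⊡ a) ⊡ (a♯ ⊡ a) = a♯ ⊡ a := B.mI.i_mul_idem a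

/-- Clifford: idempotents are central. -/
theorem central {e : S} (he : e ⊡ e = e) (a : S) : e ⊡ a = a ⊡ e := by
  have hi : a ⊡ (a ⊡ a♯) = a := by rw [B.clifford, ← B.mul_assoc, B.mul_reg]
  have hii : a♯ ⊡ (e ⊡ a) = (a ⊡ a♯) ⊡ e := by
    have h1 := B.clifford (e ⊡ a)
    rw [B.inv_mul, B.inv_idem he] at h1
    -- h1 : (e ⊡ a) ⊡ (a♯ ⊡ e) = (a♯ ⊡ e) ⊡ (e ⊡ a)
    have h2 : (e ⊡ a) ⊡ (a♯ ⊡ e) = (e ⊡ (a ⊡ a♯)) ⊡ e := by simp only [B.mul_assoc]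
    have h3 : (a♯ ⊡ e) ⊡ (e ⊡ a) = a♯ ⊡ ((e ⊡ e) ⊡ a) := by simp only [B.mul_assoc]
    rw [h2, B.mcomm he (B.mii a)] at h1
    rw [h3, he] at h1
    have h4 : ((a ⊡ a♯) ⊡ e) ⊡ e = (a ⊡ a♯) ⊡ (e ⊡ e) := by simp only [B.mul_assoc]
    rw [h4, he] at h1
    exact h1.symm
  calc e ⊡ a = ((a ⊡ a♯) ⊡ e) ⊡ a := by
        rw [← B.mcomm he (B.mii a), B.mul_assoc, B.mul_reg]
      _ = a ⊡ (a♯ ⊡ (e ⊡ a)) := by simp only [B.mul_assoc]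
      _ = a ⊡ ((a ⊡ a♯) ⊡ e) := by rw [hii]
      _ = (a ⊡ (a ⊡ a♯)) ⊡ e := by simp only [B.mul_assoc]
      _ = a ⊡ e := by rw [hi]

end
end DualWeakBrace


namespace DualWeakBrace
variable {S : Type*} (B : DualWeakBrace S)
section
local infixl:65 " ⊹ " => B.add
local infixl:70 " ⊡ " => B.mul
local prefix:max "♮" => B.neg
local postfix:max "♯" => B.inv

/-- a mult-idempotent is add-idempotent -/
theorem idem_plus {e : S} (he : e ⊡ e = e) : e ⊹ e = e := by
  have h1 : e ⊡ e♯ = e := by rw [B.inv_idem he, he]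
  have h2 : ♮e ⊹ e = e := by rw [← B.weak, h1]
  calc e ⊹ e = (♮e ⊹ e) ⊹ (♮e ⊹ e) := by rw [h2]
    _ = ♮e ⊹ ((e ⊹ ♮e) ⊹ e) := by simp only [B.add_assoc]
    _ = ♮e ⊹ e := by rw [B.add_reg]
    _ = e := h2

theorem neg_idem_mul {e : S} (he : e ⊡ e = e) : ♮e = e := B.neg_idem (B.idem_plus he)

/-- an add-idempotent is mult-idempotent -/
theorem mul_idem_plus {f : S} (hf : f ⊹ f = f) : f ⊡ f = f := by
  have hn : ♮f = f := B.neg_idem hf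
  have h1 : f ⊡ f♯ = f := by rw [B.weak, hn, hf]
  have h2 : f♯ = f := by
    have h := B.ireg' f
    rw [h1] at h
    rw [← h, ← B.clifford, h1]
  calc f ⊡ f = f ⊡ f♯ := by rw [h2]
    _ = f := h1

/-- idempotents: mult = add -/
theorem EF {e f : S} (he : e ⊡ e = e) (hf : f ⊡ f = f) : e ⊡ f = e ⊹ f := by
  have hep : e ⊹ e = e := B.idem_plus he
  have hfp : f ⊹ f = f := B.idem_plus hf
  have hne : ♮e = e := B.neg_idem hep
  have hnf : ♮f = f := B.neg_idem hfp
  have hh : (e ⊡ f) ⊡ (e ⊡ f) = e ⊡ f := B.midem he hf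
  have hhp : (e ⊡ f) ⊹ (e ⊡ f) = e ⊡ f := B.idem_plus hh
  have hA : e ⊡ f = e ⊡ f ⊹ e ⊹ e ⊡ f := by
    have d := B.dist e f f
    rw [hfp, hne] at d; exact d
  have hhe : e ⊡ f ⊹ e = e ⊡ f := by
    have h : e ⊡ f ⊹ e ⊹ e ⊡ f = e ⊡ f ⊹ e := by
      rw [B.add_assoc, B.acomm hep hhp, ← B.add_assoc, hhp]
    rw [← h, ← hA]
  have hcomm : e ⊡ f = f ⊡ e := B.mcomm he hf
  have hB : e ⊡ f = e ⊡ f ⊹ f ⊹ e ⊡ f := by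
    have d := B.dist f e e
    rw [hep, hnf, ← hcomm] at d; exact d
  have hhf : e ⊡ f ⊹ f = e ⊡ f := by
    have h : e ⊡ f ⊹ f ⊹ e ⊡ f = e ⊡ f ⊹ f := by
      rw [B.add_assoc, B.acomm hfp hhp, ← B.add_assoc, hhp]
    rw [← h, ← hB]
  have hm : (e ⊹ f) ⊹ (e ⊹ f) = e ⊹ f := B.aidem hep hfp
  have hmm : (e ⊹ f) ⊡ (e ⊹ f) = e ⊹ f := B.mul_idem_plus hm
  have hnm : ♮(e ⊹ f) = e ⊹ f := B.neg_idem hm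
  have dm := B.dist (e ⊹ f) e f
  rw [hmm, hnm] at dm
  have hme : (e ⊹ f) ⊡ e = e ⊹ e ⊡ f := by
    rw [B.mcomm hmm he]
    have d := B.dist e e f
    rw [he, hne] at d
    rw [d, hep]
  have hmf : (e ⊹ f) ⊡ f = e ⊡ f ⊹ f := by
    rw [B.mcomm hmm hf]
    have d := B.dist f e f
    rw [hf, hnf, ← hcomm] at d
    rw [d, B.add_assoc, hfp]
  rw [hme, hmf] at dm
  -- dm : e ⊹ f = ((e ⊹ e⊡f) ⊹ (e ⊹ f)) ⊹ (e⊡f ⊹ f)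
  have heh : e ⊹ e ⊡ f = e ⊡ f := by rw [B.acomm hep hhp, hhe]
  have hhm : e ⊡ f ⊹ (e ⊹ f) = e ⊡ f := by rw [← B.add_assoc, hhe, hhf]
  rw [heh, hhm, hhf, hhp] at dm
  exact dm.symm

/-- right absorption for a⊡e -/
theorem A2e {e : S} (he : e ⊡ e = e) (a : S) : a ⊡ e ⊹ (♮a ⊹ a) = a ⊡ e := by
  have h1 : e ⊹ a♯ ⊡ a = e ⊡ (a♯ ⊡ a) := (B.EF he (B.imi a)).symm
  have d := B.dist a e (a♯ ⊡ a)
  rw [B.mreg' a] at d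
  rw [h1] at d
  have hL : a ⊡ (e ⊡ (a♯ ⊡ a)) = a ⊡ e := by
    rw [B.mcomm he (B.imi a), ← B.mul_assoc, B.mreg']
  rw [hL] at d
  -- d : a ⊡ e = a ⊡ e ⊹ ♮a ⊹ a
  rw [← B.add_assoc]; exact d.symm

theorem A1e {e : S} (he : e ⊡ e = e) (a : S) : a ⊹ (♮a ⊹ a ⊡ e) = a ⊡ e := by
  have hu : a ⊡ e = a ⊡ e ⊹ ♮a ⊹ a ⊡ e := by
    have d := B.dist a e e
    rw [B.idem_plus he] at d; exact d
  have idem1 : (♮a ⊹ a ⊡ e) ⊹ (♮a ⊹ a ⊡ e) = ♮a ⊹ a ⊡ e := by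
    calc (♮a ⊹ a ⊡ e) ⊹ (♮a ⊹ a ⊡ e) = ♮a ⊹ (a ⊡ e ⊹ ♮a ⊹ a ⊡ e) := by
          simp only [B.add_assoc]
      _ = ♮a ⊹ a ⊡ e := by rw [← hu]
  have idem2 : (a ⊡ e ⊹ ♮a) ⊹ (a ⊡ e ⊹ ♮a) = a ⊡ e ⊹ ♮a := by
    calc (a ⊡ e ⊹ ♮a) ⊹ (a ⊡ e ⊹ ♮a) = (a ⊡ e ⊹ ♮a ⊹ a ⊡ e) ⊹ ♮a := by
          simp only [B.add_assoc]
      _ = a ⊡ e ⊹ ♮a := by rw [← hu]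
  have E1 : a ⊹ ♮(a ⊡ e) = a ⊡ e ⊹ ♮a := by
    have h := B.neg_idem idem2
    rw [B.neg_add, B.nn] at h; exact h
  have E2 : ♮(a ⊡ e) ⊹ a = ♮a ⊹ a ⊡ e := by
    have h := B.neg_idem idem1
    rw [B.neg_add, B.nn] at h; exact h
  calc a ⊹ (♮a ⊹ a ⊡ e) = a ⊹ (♮(a ⊡ e) ⊹ a) := by rw [E2]
    _ = (a ⊹ ♮(a ⊡ e)) ⊹ a := by rw [B.add_assoc]
    _ = (a ⊡ e ⊹ ♮a) ⊹ a := by rw [E1]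
    _ = a ⊡ e ⊹ (♮a ⊹ a) := by rw [B.add_assoc]
    _ = a ⊡ e := B.A2e he a

theorem A1 (a b : S) : a ⊹ (♮a ⊹ a ⊡ b) = a ⊡ b := by
  have hX : (♮b ⊡ (♮b)♯) ⊡ (♮b ⊡ (♮b)♯) = ♮b ⊡ (♮b)♯ := B.mii ♮b
  have hXb : ♮b ⊡ (♮b)♯ ⊹ b = b := by
    rw [B.weak, B.nn, B.add_reg]
  have d := B.dist a (♮b ⊡ (♮b)♯) b
  rw [hXb] at d
  -- d : a ⊡ b = a ⊡ X ⊹ ♮a ⊹ a ⊡ b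
  calc a ⊹ (♮a ⊹ a ⊡ b) = a ⊹ (♮a ⊹ (a ⊡ (♮b ⊡ (♮b)♯) ⊹ ♮a ⊹ a ⊡ b)) := by rw [← d]
    _ = (a ⊹ (♮a ⊹ a ⊡ (♮b ⊡ (♮b)♯))) ⊹ (♮a ⊹ a ⊡ b) := by simp only [B.add_assoc]
    _ = a ⊡ (♮b ⊡ (♮b)♯) ⊹ ♮a ⊹ a ⊡ b := by rw [B.A1e hX a, B.add_assoc]
    _ = a ⊡ b := d.symm

theorem A2 (a b : S) : a ⊡ b ⊹ (♮a ⊹ a) = a ⊡ b := by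
  have hY : (b ⊡ b♯) ⊡ (b ⊡ b♯) = b ⊡ b♯ := B.mii b
  have hbY : b ⊹ b ⊡ b♯ = b := by
    rw [B.weak]; exact B.areg' b
  have d := B.dist a b (b ⊡ b♯)
  rw [hbY] at d
  -- d : a ⊡ b = a ⊡ b ⊹ ♮a ⊹ a ⊡ Y
  calc a ⊡ b ⊹ (♮a ⊹ a) = (a ⊡ b ⊹ ♮a ⊹ a ⊡ (b ⊡ b♯)) ⊹ (♮a ⊹ a) := by rw [← d]
    _ = (a ⊡ b ⊹ ♮a) ⊹ (a ⊡ (b ⊡ b♯) ⊹ (♮a ⊹ a)) := by simp only [B.add_assoc]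
    _ = (a ⊡ b ⊹ ♮a) ⊹ a ⊡ (b ⊡ b♯) := by rw [B.A2e hY a]
    _ = a ⊡ b := d.symm

theorem oneE {e : S} (he : e ⊡ e = e) (x : S) : e ⊹ e ⊡ x = e ⊡ x := by
  have h := B.A1 e x
  rw [B.neg_idem_mul he, ← B.add_assoc, B.idem_plus he] at h
  exact h

theorem twoE {e : S} (he : e ⊡ e = e) (x : S) : e ⊡ x ⊹ e = e ⊡ x := by
  have h := B.A2 e x
  rw [B.neg_idem_mul he, ← B.add_assoc] at h
  rw [B.add_assoc, B.idem_plus he] at h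
  exact h

theorem oneE' {e : S} (he : e ⊡ e = e) (x w : S) :
    e ⊹ (e ⊡ x ⊹ w) = e ⊡ x ⊹ w := by
  rw [← B.add_assoc, B.oneE he]

theorem lam_neg (a x : S) : ♮a ⊹ a ⊡ ♮x = ♮(a ⊡ x) ⊹ a := by
  have h1 : (♮a ⊹ a ⊡ x ⊹ ♮a ⊹ a ⊡ ♮x) ⊹ (♮a ⊹ a ⊡ x) = ♮a ⊹ a ⊡ x := by
    have h : ♮a ⊹ a ⊡ ((x ⊹ ♮x) ⊹ x)
        = (♮a ⊹ a ⊡ x ⊹ ♮a ⊹ a ⊡ ♮x) ⊹ (♮a ⊹ a ⊡ x) := by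
      rw [B.dist, B.dist]; simp only [B.add_assoc]
    rw [B.add_reg] at h; exact h.symm
  have h2 : (♮a ⊹ a ⊡ ♮x ⊹ ♮a ⊹ a ⊡ x) ⊹ (♮a ⊹ a ⊡ ♮x) = ♮a ⊹ a ⊡ ♮x := by
    have h : ♮a ⊹ a ⊡ ((♮x ⊹ x) ⊹ ♮x)
        = (♮a ⊹ a ⊡ ♮x ⊹ ♮a ⊹ a ⊡ x) ⊹ (♮a ⊹ a ⊡ ♮x) := by
      rw [B.dist, B.dist]; simp only [B.add_assoc]
    rw [B.neg_reg] at h; exact h.symm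
  have h1' : ((♮a ⊹ a ⊡ x) ⊹ (♮a ⊹ a ⊡ ♮x)) ⊹ (♮a ⊹ a ⊡ x) = ♮a ⊹ a ⊡ x := by
    have hh : ((♮a ⊹ a ⊡ x) ⊹ (♮a ⊹ a ⊡ ♮x)) ⊹ (♮a ⊹ a ⊡ x)
        = (♮a ⊹ a ⊡ x ⊹ ♮a ⊹ a ⊡ ♮x) ⊹ (♮a ⊹ a ⊡ x) := by simp only [B.add_assoc]
    rw [hh]; exact h1
  have h2' : ((♮a ⊹ a ⊡ ♮x) ⊹ (♮a ⊹ a ⊡ x)) ⊹ (♮a ⊹ a ⊡ ♮x) = ♮a ⊹ a ⊡ ♮x := by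
    have hh : ((♮a ⊹ a ⊡ ♮x) ⊹ (♮a ⊹ a ⊡ x)) ⊹ (♮a ⊹ a ⊡ ♮x)
        = (♮a ⊹ a ⊡ ♮x ⊹ ♮a ⊹ a ⊡ x) ⊹ (♮a ⊹ a ⊡ ♮x) := by simp only [B.add_assoc]
    rw [hh]; exact h2
  have huniq := B.neg_unique (♮a ⊹ a ⊡ x) (♮a ⊹ a ⊡ ♮x) h1' h2'
  rw [huniq, B.neg_add, B.nn]

theorem L3 (a x : S) : a ⊡ ♮x = a ⊹ (♮(a ⊡ x) ⊹ a) := by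
  rw [← B.A1 a ♮x, B.lam_neg]

theorem NEG {e : S} (he : e ⊡ e = e) (x : S) : ♮(e ⊡ x) = e ⊡ ♮x := by
  have hne : ♮e = e := B.neg_idem_mul he
  have h1 : (e ⊡ x ⊹ e ⊡ ♮x) ⊹ e ⊡ x = e ⊡ x := by
    have h : e ⊡ ((x ⊹ ♮x) ⊹ x) = (e ⊡ x ⊹ e ⊡ ♮x) ⊹ e ⊡ x := by
      rw [B.dist, B.dist, hne]
      simp only [B.add_assoc]
      rw [B.oneE' he, B.oneE he]
    rw [B.add_reg] at h; exact h.symm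
  have h2 : (e ⊡ ♮x ⊹ e ⊡ x) ⊹ e ⊡ ♮x = e ⊡ ♮x := by
    have h : e ⊡ ((♮x ⊹ x) ⊹ ♮x) = (e ⊡ ♮x ⊹ e ⊡ x) ⊹ e ⊡ ♮x := by
      rw [B.dist, B.dist, hne]
      simp only [B.add_assoc]
      rw [B.oneE' he, B.oneE he]
    rw [B.neg_reg] at h; exact h.symm
  exact (B.neg_unique (e ⊡ x) (e ⊡ ♮x) h1 h2).symm

theorem ESr {e y : S} (he : e ⊡ e = e) (hy : y ⊹ e = y) : e ⊡ y = y := by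
  have hney : e ⊹ ♮y = ♮y := by
    have h := congrArg B.neg hy
    rw [B.neg_add, B.neg_idem_mul he] at h; exact h
  have hef : e ⊹ y ⊡ y♯ = y ⊡ y♯ := by
    rw [B.weak, ← B.add_assoc, hney]
  have hEF : e ⊡ (y ⊡ y♯) = y ⊡ y♯ := by
    rw [B.EF he (B.mii y)]; exact hef
  calc e ⊡ y = e ⊡ ((y ⊡ y♯) ⊡ y) := by rw [B.mul_reg]
    _ = (e ⊡ (y ⊡ y♯)) ⊡ y := (B.mul_assoc _ _ _).symm
    _ = y := by rw [hEF, B.mul_reg]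

theorem ESl {e y : S} (he : e ⊡ e = e) (hy : e ⊹ y = y) : e ⊡ y = y := by
  have hn : ♮y ⊹ e = ♮y := by
    have h := congrArg B.neg hy
    rw [B.neg_add, B.neg_idem_mul he] at h
    exact h
  have hWe : (y ⊹ ♮y) ⊹ e = y ⊹ ♮y := by rw [B.add_assoc, hn]
  have hWi : (y ⊹ ♮y) ⊹ (y ⊹ ♮y) = y ⊹ ♮y := by
    have h : (y ⊹ ♮y) ⊹ (y ⊹ ♮y) = y ⊹ ((♮y ⊹ y) ⊹ ♮y) := by simp only [B.add_assoc]
    rw [h, B.neg_reg]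
  have heW : e ⊹ (y ⊹ ♮y) = y ⊹ ♮y := by
    rw [B.acomm (B.idem_plus he) hWi]; exact hWe
  have hWval : ♮y ⊡ (♮y)♯ = y ⊹ ♮y := by rw [B.weak, B.nn]
  have hEW : e ⊡ (♮y ⊡ (♮y)♯) = ♮y ⊡ (♮y)♯ := by
    rw [B.EF he (B.mii ♮y), hWval]; exact heW
  have hEny : e ⊡ ♮y = ♮y := by
    calc e ⊡ ♮y = e ⊡ ((♮y ⊡ (♮y)♯) ⊡ ♮y) := by rw [B.mul_reg]
      _ = (e ⊡ (♮y ⊡ (♮y)♯)) ⊡ ♮y := (B.mul_assoc _ _ _).symm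
      _ = ♮y := by rw [hEW, B.mul_reg]
  have h2 : ♮(e ⊡ y) = ♮y := by rw [B.NEG he, hEny]
  calc e ⊡ y = ♮♮(e ⊡ y) := (B.nn _).symm
    _ = ♮♮y := by rw [h2]
    _ = y := B.nn y

theorem ES {e : S} (he : e ⊡ e = e) (x : S) : e ⊡ x = e ⊹ x := by
  have h1 : e ⊹ (e ⊹ x) = e ⊹ x := by rw [← B.add_assoc, B.idem_plus he]
  have h2 : e ⊡ (e ⊹ x) = e ⊹ x := B.ESl he h1
  have h3 : e ⊡ (e ⊹ x) = e ⊡ x := by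
    rw [B.dist, he, B.neg_idem_mul he, B.idem_plus he, B.oneE he]
  rw [← h3, h2]

theorem ES2 {e : S} (he : e ⊡ e = e) (x : S) : x ⊹ e = e ⊡ x := by
  have h : ♮(x ⊹ e) = ♮(e ⊡ x) := by
    rw [B.neg_add, B.neg_idem_mul he, ← B.ES he, ← B.NEG he]
  rw [← B.nn (x ⊹ e), h, B.nn]

theorem ES3 {e : S} (he : e ⊡ e = e) (x : S) : e ⊹ x = x ⊹ e := by
  rw [B.ES2 he x]; exact (B.ES he x).symm

theorem ZZ (x : S) : x ⊹ ♮x = x ⊡ x♯ := by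
  have hval : ♮x ⊡ (♮x)♯ = x ⊹ ♮x := by rw [B.weak, B.nn]
  have h1 : (♮x ⊡ (♮x)♯) ⊡ x = x := by
    rw [B.ES (B.mii ♮x) x, hval, B.add_reg]
  have h2 : (♮x ⊡ (♮x)♯) ⊡ (x ⊡ x♯) = x ⊡ x♯ := by
    rw [← B.mul_assoc, h1]
  have h3 : (x ⊡ x♯) ⊡ ♮x = ♮x := by
    rw [B.ES (B.mii x) ♮x, B.weak, B.neg_reg]
  have h4 : (x ⊡ x♯) ⊡ (♮x ⊡ (♮x)♯) = ♮x ⊡ (♮x)♯ := by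
    rw [← B.mul_assoc, h3]
  have h5 := B.mcomm (B.mii ♮x) (B.mii x)
  rw [← hval, ← h4, ← h5, h2]

theorem ZZ' (x : S) : ♮x ⊹ x = x ⊡ x♯ := (B.weak x).symm

end
end DualWeakBrace

namespace DualWeakBrace
variable {S : Type*} (B : DualWeakBrace S)
section
local infixl:65 " ⊹ " => B.add
local infixl:70 " ⊡ " => B.mul
local prefix:max "♮" => B.neg
local postfix:max "♯" => B.inv

/-- Clifford sorting: `(uz)(uz)⁻` absorbs `u(wz)`. -/
theorem CSp (u w z : S) :
    ((u ⊡ z) ⊡ (u ⊡ z)♯) ⊡ (u ⊡ (w ⊡ z)) = u ⊡ (w ⊡ z) := by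
  have h0 : (u ⊡ z)♯ = z♯ ⊡ u♯ := B.inv_mul u z
  have h1 : ((u ⊡ z) ⊡ (u ⊡ z)♯) ⊡ (u ⊡ (w ⊡ z))
      = u ⊡ ((z ⊡ z♯) ⊡ ((u♯ ⊡ u) ⊡ (w ⊡ z))) := by
    rw [h0]; simp only [B.mul_assoc]
  have hc : (z ⊡ z♯) ⊡ (u♯ ⊡ u) = (u♯ ⊡ u) ⊡ (z ⊡ z♯) := B.mcomm (B.mii z) (B.imi u)
  have h2 : (z ⊡ z♯) ⊡ ((u♯ ⊡ u) ⊡ (w ⊡ z)) = (u♯ ⊡ u) ⊡ ((z ⊡ z♯) ⊡ (w ⊡ z)) := by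
    calc (z ⊡ z♯) ⊡ ((u♯ ⊡ u) ⊡ (w ⊡ z)) = ((z ⊡ z♯) ⊡ (u♯ ⊡ u)) ⊡ (w ⊡ z) :=
          (B.mul_assoc _ _ _).symm
      _ = ((u♯ ⊡ u) ⊡ (z ⊡ z♯)) ⊡ (w ⊡ z) := by rw [hc]
      _ = (u♯ ⊡ u) ⊡ ((z ⊡ z♯) ⊡ (w ⊡ z)) := B.mul_assoc _ _ _
  have h3 : (z ⊡ z♯) ⊡ (w ⊡ z) = w ⊡ z := by
    calc (z ⊡ z♯) ⊡ (w ⊡ z) = ((z ⊡ z♯) ⊡ w) ⊡ z := (B.mul_assoc _ _ _).symm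
      _ = (w ⊡ (z ⊡ z♯)) ⊡ z := by rw [B.central (B.mii z) w]
      _ = w ⊡ ((z ⊡ z♯) ⊡ z) := B.mul_assoc _ _ _
      _ = w ⊡ z := by rw [B.mul_reg]
  have h4 : u ⊡ ((u♯ ⊡ u) ⊡ (w ⊡ z)) = u ⊡ (w ⊡ z) := by
    calc u ⊡ ((u♯ ⊡ u) ⊡ (w ⊡ z)) = (u ⊡ (u♯ ⊡ u)) ⊡ (w ⊡ z) := (B.mul_assoc _ _ _).symm
      _ = u ⊡ (w ⊡ z) := by rw [B.mreg']
  rw [h1, h2, h3, h4]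

/-- σ is "multiplicative" along the solution: σ_a(bc) = σ_a(b) σ_{τ_b(a)}(c). -/
theorem star (z a b c : S) :
    B.sigma z a (b ⊡ c) = B.sigma z a b ⊡ B.sigma z (B.tau z b a) c := by
  obtain ⟨P, hP⟩ : ∃ x, x = a ⊡ z := ⟨_, rfl⟩
  obtain ⟨Q, hQ⟩ : ∃ x, x = (a ⊡ b) ⊡ z := ⟨_, rfl⟩
  obtain ⟨R, hR⟩ : ∃ x, x = ((a ⊡ b) ⊡ c) ⊡ z := ⟨_, rfl⟩
  obtain ⟨s, hs⟩ : ∃ x, x = ♮P ⊹ Q := ⟨_, rfl⟩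
  obtain ⟨t, ht⟩ : ∃ x, x = B.tau z b a := ⟨_, rfl⟩
  have hsig : B.sigma z a b = s := by rw [hs, hP, hQ]; rfl
  have htz : t ⊡ z = s♯ ⊡ Q := by
    rw [ht]
    show (((B.sigma z a b)♯ ⊡ a) ⊡ b) ⊡ z = s♯ ⊡ Q
    rw [hsig, hQ]; simp only [B.mul_assoc]
  have htcz : (t ⊡ c) ⊡ z = s♯ ⊡ R := by
    rw [ht]
    show ((((B.sigma z a b)♯ ⊡ a) ⊡ b) ⊡ c) ⊡ z = s♯ ⊡ R
    rw [hsig, hR]; simp only [B.mul_assoc]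
  have hsigt : B.sigma z t c = ♮(s♯ ⊡ Q) ⊹ s♯ ⊡ R := by
    show ♮(t ⊡ z) ⊹ (t ⊡ c) ⊡ z = _
    rw [htz, htcz]
  have hsigbc : B.sigma z a (b ⊡ c) = ♮P ⊹ R := by
    show ♮(a ⊡ z) ⊹ (a ⊡ (b ⊡ c)) ⊡ z = _
    rw [← hP, hR]
    have h : (a ⊡ (b ⊡ c)) ⊡ z = ((a ⊡ b) ⊡ c) ⊡ z := by simp only [B.mul_assoc]
    rw [h]
  have hp : (P ⊡ P♯) ⊡ (P ⊡ P♯) = P ⊡ P♯ := B.mii P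
  have hq : (Q ⊡ Q♯) ⊡ (Q ⊡ Q♯) = Q ⊡ Q♯ := B.mii Q
  have hqQ : (Q ⊡ Q♯) ⊡ Q = Q := B.mul_reg Q
  have hpQ : (P ⊡ P♯) ⊡ Q = Q := by
    rw [hP, hQ, B.mul_assoc a b z]; exact B.CSp a b z
  have hqR : (Q ⊡ Q♯) ⊡ R = R := by
    rw [hQ, hR, B.mul_assoc (a ⊡ b) c z]; exact B.CSp (a ⊡ b) c z
  have hpR : (P ⊡ P♯) ⊡ R = R := by
    rw [hP, hR]
    have h := B.CSp a (b ⊡ c) z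
    have e1 : a ⊡ ((b ⊡ c) ⊡ z) = ((a ⊡ b) ⊡ c) ⊡ z := by simp only [B.mul_assoc]
    rw [e1] at h; exact h
  have hEpq : s ⊡ s♯ = (P ⊡ P♯) ⊹ (Q ⊡ Q♯) := by
    rw [B.weak s, hs, B.neg_add, B.nn]
    calc (♮Q ⊹ P) ⊹ (♮P ⊹ Q) = ♮Q ⊹ ((P ⊹ ♮P) ⊹ Q) := by simp only [B.add_assoc]
      _ = ♮Q ⊹ ((P ⊡ P♯) ⊹ Q) := by rw [B.ZZ P]
      _ = ♮Q ⊹ (Q ⊹ (P ⊡ P♯)) := by rw [B.ES3 hp Q]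
      _ = (♮Q ⊹ Q) ⊹ (P ⊡ P♯) := by rw [B.add_assoc]
      _ = (Q ⊡ Q♯) ⊹ (P ⊡ P♯) := by rw [B.ZZ' Q]
      _ = (P ⊡ P♯) ⊹ (Q ⊡ Q♯) := B.acomm (B.idem_plus hq) (B.idem_plus hp)
  have hEmul : s ⊡ s♯ = (P ⊡ P♯) ⊡ (Q ⊡ Q♯) := by
    rw [hEpq]; exact (B.EF hp hq).symm
  have hE : (s ⊡ s♯) ⊡ (s ⊡ s♯) = s ⊡ s♯ := B.mii s
  have hEQ : (s ⊡ s♯) ⊡ Q = Q := by rw [hEmul, B.mul_assoc, hqQ, hpQ]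
  have hER : (s ⊡ s♯) ⊡ R = R := by rw [hEmul, B.mul_assoc, hqR, hpR]
  rw [← ht, hsigbc, hsigt, hsig]
  have hd := B.dist s ♮(s♯ ⊡ Q) (s♯ ⊡ R)
  have h2 : s ⊡ (s♯ ⊡ R) = R := by rw [← B.mul_assoc]; exact hER
  have h3 : s ⊡ ♮(s♯ ⊡ Q) = s ⊹ (♮Q ⊹ s) := by
    rw [B.L3 s (s♯ ⊡ Q), ← B.mul_assoc, hEQ]
  rw [hd, h2, h3]
  have key : ((s ⊹ (♮Q ⊹ s)) ⊹ ♮s) ⊹ R = ♮P ⊹ R := by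
    have e1 : ((s ⊹ (♮Q ⊹ s)) ⊹ ♮s) ⊹ R = (s ⊹ ♮Q) ⊹ ((s ⊹ ♮s) ⊹ R) := by
      simp only [B.add_assoc]
    rw [e1, B.ZZ s, ← B.ES hE R, hER]
    have e2 : s ⊹ ♮Q = ♮P ⊹ (Q ⊡ Q♯) := by
      rw [hs, B.add_assoc, B.ZZ Q]
    rw [e2, B.add_assoc, ← B.ES hq R, hqR]
  exact key.symm

end
end DualWeakBrace


/-- For `z ∈ D_r(S)`, the map `τ^z` is an anti-homomorphism:
`τ^z_{b∘c} = τ^z_c ∘ τ^z_b`. -/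
theorem statement3 {S : Type*} (B : DualWeakBrace S) (z : S) (hz : z ∈ B.Dr) :
    ∀ b c a : S, B.tau z (B.mul b c) a = B.tau z c (B.tau z b a) := by
  intro b c a
  have hstar := B.star z a b c
  simp only [DualWeakBrace.tau] at hstar ⊢
  rw [hstar, B.inv_mul]
  simp only [B.mul_assoc]
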